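/- Let k ∈ ℕ and let 𝔸 and 𝔹 be relational structures on the sets A and A^k respectively. Assume I = (V, 𝒞) is an instance of CSP(𝔸), S_1, …, S_m are basic relations of 𝔹, σ_1, …, σ_m are tuples of elements of V^k, and r, s are positive integers such that: (1) 𝒫_𝔸^r(I) ⊢ S̄_i(σ̄_i) for each i = 1, …, m, and (2) 𝒫_𝔹^s(J) ⊢ G, where J is the instance (V^k, {(σ_i, S_i) : i = 1, …, m}) of CSP(𝔹). Then 𝒫_𝔸^{r+ks}(I) ⊢ G. -/

import Mathlib

/-!
A derivation of `𝒫_𝔹^s` on `J` is replayed fact by fact in `𝒫_𝔸^(r+ks)`, a derived fact `R(ρ)`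
becoming `R̄(ρ̄)`. To replay one rule of `𝒫_𝔹^s`, the unpacking of its `s` variables is kept in the
last `ks` variables of `𝒫_𝔸^(r+ks)`, a register carrying a single derived relation, while the first
`r` variables replay the `𝒫_𝔸^r`-derivations of the EDB premises `S̄_i(σ̄_i)`. Replaying such a
derivation alongside the register conjoins the premise to the carried relation, and since every
rule of `𝒫_𝔸^r` comes with its mirror image, the same derivation run backwards removes it again.
So the IDB premise is loaded into the register, the EDB premises are conjoined to it, the rule of
`𝒫_𝔹^s` is applied inside the register (its consistency and that of its mirror image being
statements about `A^k`), and the EDB premises are removed.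
-/

namespace CSPPaper

/-- A relational structure on `A`: a family of finitary relations (the basic
relations), a relation of arity `n` being a set of `n`-tuples `Fin n → A`. -/
structure RelStruct (A : Type) where
  basic : Set (Σ n : ℕ, Set (Fin n → A))

/-- A CSP instance with variables `V` over domain `A`: a set of constraints,
each consisting of a scope (a tuple of variables) and a constraint relation. -/
structure Instance (A : Type) (V : Type) where
  constraints : Set (Σ n : ℕ, (Fin n → V) × Set (Fin n → A))

/-- `f : V → A` is a solution of the instance `I`. -/
def Instance.Sol {A V : Type} (I : Instance A V) (f : V → A) : Prop :=
  ∀ c ∈ I.constraints, (fun i => f (c.2.1 i)) ∈ c.2.2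

def Instance.Satisfiable {A V : Type} (I : Instance A V) : Prop :=
  ∃ f, I.Sol f

/-- `I` is an instance of `CSP(𝔸)`: all its constraint relations are basic
relations of `𝔸`. -/
def IsCSPInstance {A V : Type} (𝔸 : RelStruct A) (I : Instance A V) : Prop :=
  ∀ c ∈ I.constraints, (⟨c.1, c.2.2⟩ : Σ n : ℕ, Set (Fin n → A)) ∈ 𝔸.basic

/-- An atom of a Datalog rule over the variable set `Fin r`: a predicate
(a relation on `A`) applied to a tuple of variables. -/
structure Atom (A : Type) (r : ℕ) where
  arity : ℕ
  scope : Fin arity → Fin r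
  rel : Set (Fin arity → A)

def Atom.holds {A : Type} {r : ℕ} (a : Atom A r) (f : Fin r → A) : Prop :=
  (fun i => f (a.scope i)) ∈ a.rel

/-- A rule of the `r`-ary maximal symmetric Datalog program `𝒫_𝔸^r` consistent
with `𝔸`: a linear Datalog rule on at most `r` variables, whose head is an IDB
(an arbitrary relation on `A` of arity at most `r`), whose body contains at most
one IDB atom (`idb`) and otherwise non-IDB atoms for basic relations of `𝔸`
of arity at most `r` (`edb`, without repetition), such that the rule is
consistent with `𝔸`, and, if the body contains an IDB atom, its mirror image is
also consistent with `𝔸`. -/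
structure Rule (A : Type) (𝔸 : RelStruct A) (r : ℕ) where
  head : Atom A r
  idb : Option (Atom A r)
  edb : List (Atom A r)
  head_arity : head.arity ≤ r
  idb_arity : ∀ a ∈ idb, a.arity ≤ r
  edb_arity : ∀ a ∈ edb, a.arity ≤ r
  edb_basic : ∀ a ∈ edb, (⟨a.arity, a.rel⟩ : Σ n : ℕ, Set (Fin n → A)) ∈ 𝔸.basic
  nodup : edb.Nodup
  consistent : ∀ f : Fin r → A,
    (∀ a ∈ idb, a.holds f) → (∀ a ∈ edb, a.holds f) → head.holds f
  mirror : ∀ a ∈ idb, ∀ f : Fin r → A,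
    head.holds f → (∀ b ∈ edb, b.holds f) → a.holds f

/-- `Derives 𝔸 r I ρ R`: the `r`-ary maximal symmetric Datalog program
`𝒫_𝔸^r` consistent with `𝔸`, run on the instance `I`, derives `R(ρ)`.
This holds if `(ρ, R)` is a constraint of `I`, or if some rule of `𝒫_𝔸^r`
with head `R(τ)` admits an evaluation `ω` of its variables into `V` with
`ω ∘ τ = ρ`, whose (at most one) IDB body atom is derived and whose non-IDB
body atoms are constraints of `I` under `ω`. -/
inductive Derives {A V : Type} (𝔸 : RelStruct A) (r : ℕ) (I : Instance A V) :
    ∀ {n : ℕ}, (Fin n → V) → Set (Fin n → A) → Prop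
  | base {n : ℕ} (ρ : Fin n → V) (R : Set (Fin n → A)) :
      (⟨n, ρ, R⟩ : Σ n : ℕ, (Fin n → V) × Set (Fin n → A)) ∈ I.constraints →
      Derives 𝔸 r I ρ R
  | step (rule : Rule A 𝔸 r) (ω : Fin r → V) :
      (∀ a ∈ rule.idb, Derives 𝔸 r I (fun i => ω (a.scope i)) a.rel) →
      (∀ a ∈ rule.edb,
        (⟨a.arity, fun i => ω (a.scope i), a.rel⟩ :
          Σ n : ℕ, (Fin n → V) × Set (Fin n → A)) ∈ I.constraints) →
      Derives 𝔸 r I (fun i => ω (rule.head.scope i)) rule.head.rel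

/-- `𝒫_𝔸^r(I) ⊢ G`: the program derives a goal predicate, i.e. an empty
relation of arity at most `r`. -/
def DerivesGoal {A V : Type} (𝔸 : RelStruct A) (r : ℕ) (I : Instance A V) : Prop :=
  ∃ (n : ℕ) (ρ : Fin n → V), n ≤ r ∧ Derives 𝔸 r I ρ (∅ : Set (Fin n → A))

/-- `𝒫_𝔸^r(I) ⊢ J`: the program run on `I` derives every constraint of `J`. -/
def DerivesInstance {A V : Type} (𝔸 : RelStruct A) (r : ℕ) (I J : Instance A V) : Prop :=
  ∀ c ∈ J.constraints, Derives 𝔸 r I c.2.1 c.2.2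

/-- An `m`-ary operation `t` preserves the `n`-ary relation `R`. -/
def PreservesRel {A : Type} {m n : ℕ} (t : (Fin m → A) → A) (R : Set (Fin n → A)) : Prop :=
  ∀ rows : Fin m → Fin n → A, (∀ j, rows j ∈ R) → (fun i => t (fun j => rows j i)) ∈ R

/-- A polymorphism of `𝔸`: an operation preserving all basic relations. -/
def IsPolymorphism {A : Type} {m : ℕ} (𝔸 : RelStruct A) (t : (Fin m → A) → A) : Prop :=
  ∀ R ∈ 𝔸.basic, PreservesRel t R.2

def ternaryOp {A : Type} (p : A → A → A → A) : (Fin 3 → A) → A :=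
  fun v => p (v 0) (v 1) (v 2)

/-- A chain of `n` Hagemann–Mitschke terms: idempotent ternary operations
`p 0, …, p n` with `p 0 x y z = x`, `p k x x y = p (k+1) x y y`, `p n x y z = z`. -/
def IsHMChain {A : Type} (n : ℕ) (p : ℕ → A → A → A → A) : Prop :=
  (∀ k ≤ n, ∀ x : A, p k x x x = x) ∧
  (∀ x y z : A, p 0 x y z = x) ∧
  (∀ x y z : A, p n x y z = z) ∧
  (∀ k < n, ∀ x y : A, p k x x y = p (k + 1) x y y)

def Pres3Set {A : Type} (p : A → A → A → A) (S : Set A) : Prop :=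
  ∀ x y z, x ∈ S → y ∈ S → z ∈ S → p x y z ∈ S

def Pres3Rel {A : Type} (p : A → A → A → A) (E : Set (A × A)) : Prop :=
  ∀ u v w, u ∈ E → v ∈ E → w ∈ E → (p u.1 v.1 w.1, p u.2 v.2 w.2) ∈ E

def PresOpSet {A : Type} {m : ℕ} (t : (Fin m → A) → A) (S : Set A) : Prop :=
  ∀ x : Fin m → A, (∀ j, x j ∈ S) → t x ∈ S

def PresOpRel {A : Type} {m : ℕ} (t : (Fin m → A) → A) (E : Set (A × A)) : Prop :=
  ∀ x y : Fin m → A, (∀ j, (x j, y j) ∈ E) → (t x, t y) ∈ E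

/-- A path instance of length `len`: variables `1, …, len`, one unary
constraint `B i` on each variable `i ∈ [1, len]`, and one binary constraint
`E i` with scope `(i, i+1)` for each `i ∈ [1, len-1]`. -/
structure PathInstance (A : Type) where
  len : ℕ
  B : ℕ → Set A
  E : ℕ → Set (A × A)

/-- A solution of the subinstance of the path instance `I` induced by `[a, b]`. -/
def IsSolutionOn {A : Type} (I : PathInstance A) (a b : ℕ) (s : ℕ → A) : Prop :=
  (∀ i, a ≤ i → i ≤ b → s i ∈ I.B i) ∧
  (∀ i, a ≤ i → i + 1 ≤ b → (s i, s (i + 1)) ∈ I.E i)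

def IsSolution {A : Type} (I : PathInstance A) (s : ℕ → A) : Prop :=
  IsSolutionOn I 1 I.len s

def unaryRel {A : Type} (S : Set A) : Set (Fin 1 → A) := {f | f 0 ∈ S}

def pairRel {A : Type} (E : Set (A × A)) : Set (Fin 2 → A) := {f | (f 0, f 1) ∈ E}

/-- The path instance `I`, presented as a CSP instance on the variable set `ℕ`. -/
def PathInstance.toInstance {A : Type} (I : PathInstance A) : Instance A ℕ where
  constraints :=
    {c | (∃ i, 1 ≤ i ∧ i ≤ I.len ∧
            c = ⟨1, fun _ => i, unaryRel (I.B i)⟩) ∨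
         (∃ i, 1 ≤ i ∧ i + 1 ≤ I.len ∧
            c = ⟨2, ![i, i + 1], pairRel (I.E i)⟩)}

/-- An `n`-braid in the path instance `I`: solutions `s 0, …, s n` and indices
`1 ≤ idx 1 < … < idx n ≤ I.len` with `s k (idx k) = s (k+1) (idx k)` and
`s (k-1) (idx (k+1)) = s k (idx (k+1))` for `k = 1, …, n-1`. -/
def IsBraid {A : Type} (I : PathInstance A) (n : ℕ) (s : ℕ → ℕ → A) (idx : ℕ → ℕ) : Prop :=
  (∀ k ≤ n, IsSolution I (s k)) ∧
  1 ≤ idx 1 ∧ idx n ≤ I.len ∧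
  (∀ k, 1 ≤ k → k < n → idx k < idx (k + 1)) ∧
  (∀ k, 1 ≤ k → k + 1 ≤ n →
    s k (idx k) = s (k + 1) (idx k) ∧ s (k - 1) (idx (k + 1)) = s k (idx (k + 1)))

/-- The binary constraint of `I` with scope `(i, i+1)` is subdirect. -/
def SubdirectAt {A : Type} (I : PathInstance A) (i : ℕ) : Prop :=
  (I.B i).Nonempty ∧ (I.B (i + 1)).Nonempty ∧
  (∀ a ∈ I.B i, ∃ b ∈ I.B (i + 1), (a, b) ∈ I.E i) ∧
  (∀ b ∈ I.B (i + 1), ∃ a ∈ I.B i, (a, b) ∈ I.E i)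

/-- The subinstance of `I` induced by `[a, b]` is subdirect. -/
def SubdirectOn {A : Type} (I : PathInstance A) (a b : ℕ) : Prop :=
  ∀ i, a ≤ i → i + 1 ≤ b → SubdirectAt I i

def Subdirect {A : Type} (I : PathInstance A) : Prop := SubdirectOn I 1 I.len

/-- The sets `C_i`: `C 1 = B 1` and
`C (i+1) = {b ∈ B (i+1) | ∃ c ∈ C i, (c, b) ∈ E i}`. -/
def reachSet {A : Type} (I : PathInstance A) : ℕ → Set A
  | 0 => ∅
  | 1 => I.B 1
  | (i + 2) => {b ∈ I.B (i + 2) | ∃ c ∈ reachSet I (i + 1), (c, b) ∈ I.E (i + 1)}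

/-- `B_{i,i+1}` contains a backward edge: an edge `(b, c) ∈ E i` with
`b ∈ B i \ C i` and `c ∈ C (i+1)`. -/
def BackwardAt {A : Type} (I : PathInstance A) (i : ℕ) : Prop :=
  1 ≤ i ∧ i + 1 ≤ I.len ∧
  ∃ b c, (b, c) ∈ I.E i ∧ b ∈ I.B i ∧ b ∉ reachSet I i ∧ c ∈ reachSet I (i + 1)

/-- Adjacency in the graph `Conn(I_{[lo,hi]})`: its vertices are pairs `(i, a)`
with `a ∈ B i`, `lo ≤ i ≤ hi`, and `(i, a)` is adjacent to `(i+1, b)` whenever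
`(a, b) ∈ E i`. -/
def connAdj {A : Type} (I : PathInstance A) (lo hi : ℕ) (p q : ℕ × A) : Prop :=
  lo ≤ p.1 ∧ p.1 + 1 ≤ hi ∧ q.1 = p.1 + 1 ∧
  p.2 ∈ I.B p.1 ∧ q.2 ∈ I.B q.1 ∧ (p.2, q.2) ∈ I.E p.1

/-- `λ_{I,lo,hi}`: the pairs `(a, b) ∈ B lo × B hi` joined by an undirected path
in `Conn(I_{[lo,hi]})`. -/
def lamRel {A : Type} (I : PathInstance A) (lo hi : ℕ) : Set (A × A) :=
  {ab | ab.1 ∈ I.B lo ∧ ab.2 ∈ I.B hi ∧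
    Relation.ReflTransGen (fun p q => connAdj I lo hi p q ∨ connAdj I lo hi q p)
      (lo, ab.1) (hi, ab.2)}

open Classical in
/-- The variable set `U` of the instance `I_λ`: the variables `1`, `len`, and
`i, i+1` for every index `i` such that `B_{i,i+1}` has a backward edge. -/
noncomputable def lamVars {A : Type} (I : PathInstance A) : Finset ℕ :=
  (Finset.Icc 1 I.len).filter
    (fun v => v = 1 ∨ v = I.len ∨ BackwardAt I v ∨ (2 ≤ v ∧ BackwardAt I (v - 1)))

/-- The `t`-th smallest element of `U` (`1`-indexed). -/
noncomputable def lamEnum {A : Type} (I : PathInstance A) (t : ℕ) : ℕ :=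
  ((lamVars I).sort (· ≤ ·)).getD (t - 1) 0

/-- The instance `I_λ`, presented as a path instance whose `t`-th variable is
the `t`-th smallest element of `U`: it consists of the subinstance of `I`
induced by `U`, where each gap between consecutive elements `u < w` of `U` with
`w > u + 1` is filled by the binary constraint `λ_{I,u,w}`. -/
noncomputable def lamInst {A : Type} (I : PathInstance A) : PathInstance A where
  len := (lamVars I).card
  B := fun t => I.B (lamEnum I t)
  E := fun t =>
    if lamEnum I (t + 1) = lamEnum I t + 1 then I.E (lamEnum I t)
    else lamRel I (lamEnum I t) (lamEnum I (t + 1))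

/-- Unpacking an `m`-tuple of elements of `V^k` into an `m*k`-tuple of
elements of `V`. -/
def unpackTuple {X : Type} {m k : ℕ} (σ : Fin m → Fin k → X) : Fin (m * k) → X :=
  fun t => σ t.divNat t.modNat

/-- Unpacking an `m`-ary relation on `A^k` into an `m*k`-ary relation on `A`. -/
def unpackRel {A : Type} {m k : ℕ} (U : Set (Fin m → Fin k → A)) :
    Set (Fin (m * k) → A) :=
  {t | ∃ u ∈ U, ∀ i : Fin (m * k), t i = u i.divNat i.modNat}

/-- The instance `I` has pathwidth at most `p`. -/
def PathwidthLE {A V : Type} (I : Instance A V) (p : ℕ) : Prop :=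
  ∃ (m : ℕ) (U : Fin m → Set V),
    (∀ v : V, ∃ i, v ∈ U i) ∧
    (∀ i, (U i).Finite ∧ (U i).ncard ≤ p + 1) ∧
    (∀ i j q : Fin m, i ≤ q → q ≤ j → ∀ v, v ∈ U i → v ∈ U j → v ∈ U q) ∧
    (∀ c ∈ I.constraints, ∃ i, Set.range c.2.1 ⊆ U i)

/-- `𝔸` has pathwidth duality `p`: for every unsatisfiable instance `I` of
`CSP(𝔸)` there is an unsatisfiable instance `J` of `CSP(𝔸)` of pathwidth at
most `p` such that identifying some variables of `J` (along `h`) yields a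
subinstance of `I`. -/
def HasPathwidthDuality {A : Type} (𝔸 : RelStruct A) (p : ℕ) : Prop :=
  ∀ (V : Type) (I : Instance A V), IsCSPInstance 𝔸 I → ¬I.Satisfiable →
    ∃ (W : Type) (J : Instance A W) (h : W → V),
      IsCSPInstance 𝔸 J ∧ ¬J.Satisfiable ∧ PathwidthLE J p ∧
      ∀ c ∈ J.constraints,
        (⟨c.1, fun i => h (c.2.1 i), c.2.2⟩ :
          Σ n : ℕ, (Fin n → V) × Set (Fin n → A)) ∈ I.constraints

/-- The `k`-th bubble power `𝔸^(k)` of `𝔸`: the relational structure on `A^k`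
whose basic relations are all unary relations definable as conjunctions of
basic relations of `𝔸` (with identification of variables and dummy variables,
but no existential quantification), and all binary relations
`E_ℐ = {(a, b) | ∀ (i,j) ∈ ℐ, a i = b j}` for `ℐ ⊆ [k]²`. -/
def bubblePower {A : Type} (𝔸 : RelStruct A) (k : ℕ) : RelStruct (Fin k → A) where
  basic :=
    {r | (∃ L : Set (Σ n : ℕ, (Fin n → Fin k) × Set (Fin n → A)),
            (∀ c ∈ L, (⟨c.1, c.2.2⟩ : Σ n : ℕ, Set (Fin n → A)) ∈ 𝔸.basic) ∧
            r = ⟨1, {f : Fin 1 → (Fin k → A) |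
                      ∀ c ∈ L, (fun i => f 0 (c.2.1 i)) ∈ c.2.2}⟩) ∨
         (∃ Idx : Set (Fin k × Fin k),
            r = ⟨2, {f : Fin 2 → (Fin k → A) | ∀ q ∈ Idx, f 0 q.1 = f 1 q.2}⟩)}

section Datalog

variable {A V : Type} {𝔸 : RelStruct A} {I : Instance A V}

def Atom.remap {r r' : ℕ} (e : Fin r → Fin r') (a : Atom A r) : Atom A r' :=
  ⟨a.arity, e ∘ a.scope, a.rel⟩

theorem Atom.forall_mem_map_remap_holds {r r' : ℕ} (e : Fin r → Fin r') (l : List (Atom A r))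
    (f : Fin r' → A) : (∀ b ∈ l.map (Atom.remap e), b.holds f) ↔ ∀ b ∈ l, b.holds (f ∘ e) :=
  List.forall_mem_map

theorem Rule.remap_edb {r N : ℕ} (rule : Rule A 𝔸 r) {ω : Fin r → V}
    (hedb : ∀ a ∈ rule.edb, (⟨a.arity, fun i => ω (a.scope i), a.rel⟩ :
      Σ n : ℕ, (Fin n → V) × Set (Fin n → A)) ∈ I.constraints)
    (hrN : r ≤ N) {e : Fin r → Fin N} {ω' : Fin N → V} (hω' : ω' ∘ e = ω) :
    ∀ b ∈ rule.edb.map (Atom.remap e), b.arity ≤ N ∧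
      (⟨b.arity, ω' ∘ b.scope, b.rel⟩ : Σ n : ℕ, (Fin n → V) × Set (Fin n → A)) ∈
        I.constraints := by
  simp only [List.mem_map]
  rintro _ ⟨b, hb, rfl⟩
  refine ⟨(rule.edb_arity b hb).trans hrN, ?_⟩
  rw [Atom.remap, ← Function.comp_assoc, hω']
  exact hedb b hb

theorem Derives.sound {r : ℕ} {f : V → A} (hf : I.Sol f) {n : ℕ} {ρ : Fin n → V}
    {R : Set (Fin n → A)} (h : Derives 𝔸 r I ρ R) : f ∘ ρ ∈ R := by
  induction h with
  | base ρ R hc => exact hf _ hc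
  | step rule ω _ hedb ih =>
    exact rule.consistent (f ∘ ω) ih fun a ha => hf _ (hedb a ha)

theorem DerivesGoal.not_satisfiable {r : ℕ} (h : DerivesGoal 𝔸 r I) : ¬I.Satisfiable := by
  rintro ⟨f, hf⟩
  obtain ⟨n, ρ, -, hρ⟩ := h
  exact hρ.sound hf

variable {N n n' : ℕ}

/-- Applies the rule `edb → R(τ)`, which belongs to `𝒫_𝔸^N`. -/
theorem Derives.of_edb (hI : IsCSPInstance 𝔸 I) (ω : Fin N → V) (τ : Fin n → Fin N)
    (hn : n ≤ N) {R : Set (Fin n → A)} (edb : List (Atom A N))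
    (hedb : ∀ a ∈ edb, a.arity ≤ N ∧
      (⟨a.arity, ω ∘ a.scope, a.rel⟩ : Σ n : ℕ, (Fin n → V) × Set (Fin n → A)) ∈ I.constraints)
    (himp : ∀ f : Fin N → A, (∀ a ∈ edb, a.holds f) → f ∘ τ ∈ R) :
    Derives 𝔸 N I (ω ∘ τ) R := by
  classical
  refine Derives.step
    { head := ⟨n, τ, R⟩
      idb := none
      edb := edb.dedup
      head_arity := hn
      idb_arity := by simp
      edb_arity := fun a ha => (hedb a (List.mem_dedup.1 ha)).1
      edb_basic := fun a ha => hI _ (hedb a (List.mem_dedup.1 ha)).2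
      nodup := edb.nodup_dedup
      consistent := fun f _ he => himp f fun a ha => he a (List.mem_dedup.2 ha)
      mirror := by simp } ω (by simp) fun a ha => (hedb a (List.mem_dedup.1 ha)).2

/-- Applies the rule `R(τ) ∧ edb → R'(τ')`, which belongs to `𝒫_𝔸^N` together with its mirror
image. -/
theorem Derives.of_symmetric (hI : IsCSPInstance 𝔸 I) (ω : Fin N → V)
    (τ : Fin n → Fin N) (τ' : Fin n' → Fin N) (hn : n ≤ N) (hn' : n' ≤ N)
    {R : Set (Fin n → A)} {R' : Set (Fin n' → A)} (edb : List (Atom A N))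
    (hedb : ∀ a ∈ edb, a.arity ≤ N ∧
      (⟨a.arity, ω ∘ a.scope, a.rel⟩ : Σ n : ℕ, (Fin n → V) × Set (Fin n → A)) ∈ I.constraints)
    (hiff : ∀ f : Fin N → A, (∀ a ∈ edb, a.holds f) → (f ∘ τ ∈ R ↔ f ∘ τ' ∈ R'))
    (h : Derives 𝔸 N I (ω ∘ τ) R) : Derives 𝔸 N I (ω ∘ τ') R' := by
  classical
  have hiff' (f : Fin N → A) (he : ∀ a ∈ edb.dedup, a.holds f) :=
    hiff f fun a ha => he a (List.mem_dedup.2 ha)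
  refine Derives.step
    { head := ⟨n', τ', R'⟩
      idb := some ⟨n, τ, R⟩
      edb := edb.dedup
      head_arity := hn'
      idb_arity := by simpa using hn
      edb_arity := fun a ha => (hedb a (List.mem_dedup.1 ha)).1
      edb_basic := fun a ha => hI _ (hedb a (List.mem_dedup.1 ha)).2
      nodup := edb.nodup_dedup
      consistent := fun f hi he => (hiff' f he).1 (hi _ rfl)
      mirror := by
        rintro a ⟨⟩ f hh he
        exact (hiff' f he).2 hh } ω (by rintro a ⟨⟩; exact h)
    fun a ha => (hedb a (List.mem_dedup.1 ha)).2

theorem Derives.iff_of_symmetric (hI : IsCSPInstance 𝔸 I) (ω : Fin N → V)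
    (τ : Fin n → Fin N) (τ' : Fin n' → Fin N) (hn : n ≤ N) (hn' : n' ≤ N)
    {R : Set (Fin n → A)} {R' : Set (Fin n' → A)} (edb : List (Atom A N))
    (hedb : ∀ a ∈ edb, a.arity ≤ N ∧
      (⟨a.arity, ω ∘ a.scope, a.rel⟩ : Σ n : ℕ, (Fin n → V) × Set (Fin n → A)) ∈ I.constraints)
    (hiff : ∀ f : Fin N → A, (∀ a ∈ edb, a.holds f) → (f ∘ τ ∈ R ↔ f ∘ τ' ∈ R')) :
    Derives 𝔸 N I (ω ∘ τ) R ↔ Derives 𝔸 N I (ω ∘ τ') R' :=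
  ⟨.of_symmetric hI ω τ τ' hn hn' edb hedb hiff,
    .of_symmetric hI ω τ' τ hn' hn edb hedb fun f he => (hiff f he).symm⟩

theorem Derives.of_forall_mem [Nonempty V] (hI : IsCSPInstance 𝔸 I) {ρ : Fin n → V}
    {R : Set (Fin n → A)} (hn : n ≤ N) (hR : ∀ x, x ∈ R) : Derives 𝔸 N I ρ R := by
  obtain ⟨ω, rfl⟩ := (Fin.castLE_injective hn).surjective_comp_right ρ
  exact .of_edb hI ω _ hn [] (by simp) fun f _ => hR _

theorem Derives.mono {r r' : ℕ} (hI : IsCSPInstance 𝔸 I) (hr : 0 < r) (hrr' : r ≤ r')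
    {ρ : Fin n → V} {R : Set (Fin n → A)} (h : Derives 𝔸 r I ρ R) : Derives 𝔸 r' I ρ R := by
  induction h with
  | base ρ R hc => exact .base ρ R hc
  | step rule ω _ hedb ih =>
    have : Nonempty V := ⟨ω ⟨0, hr⟩⟩
    obtain ⟨ω', hω'⟩ : ∃ ω' : Fin r' → V, ω' ∘ Fin.castLE hrr' = ω :=
      (Fin.castLE_injective hrr').surjective_comp_right ω
    have hedb' := rule.remap_edb hedb hrr' hω'
    have hsc {m : ℕ} (sc : Fin m → Fin r) : ω' ∘ (Fin.castLE hrr' ∘ sc) = ω ∘ sc := by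
      rw [← Function.comp_assoc, hω']
    show Derives 𝔸 r' I (ω ∘ rule.head.scope) rule.head.rel
    rw [← hsc]
    cases hidb : rule.idb with
    | none =>
      refine .of_edb hI ω' _ (rule.head_arity.trans hrr') _ hedb' fun f he => ?_
      rw [Atom.forall_mem_map_remap_holds] at he
      exact rule.consistent _ (by simp [hidb]) he
    | some a =>
      have ha : a ∈ rule.idb := hidb
      refine .of_symmetric hI ω' _ _ ((rule.idb_arity a ha).trans hrr')
        (rule.head_arity.trans hrr') _ hedb' (fun f he => ?_) (by rw [hsc]; exact ih a ha)
      rw [Atom.forall_mem_map_remap_holds] at he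
      exact ⟨fun h => rule.consistent _
          (fun a' ha' => Option.some_inj.mp (hidb.symm.trans ha') ▸ h) he,
        fun h => rule.mirror a ha (f ∘ Fin.castLE hrr') h he⟩

theorem DerivesGoal.mono {r r' : ℕ} (hI : IsCSPInstance 𝔸 I) (hr : 0 < r) (hrr' : r ≤ r')
    (h : DerivesGoal 𝔸 r I) : DerivesGoal 𝔸 r' I :=
  let ⟨n, ρ, hn, hρ⟩ := h
  ⟨n, ρ, hn.trans hrr', hρ.mono hI hr hrr'⟩

end Datalog

section Register

variable {A V : Type} {𝔸 : RelStruct A} {I : Instance A V} {r c n n' : ℕ}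

def prodRel (Q : Set (Fin c → A)) (R : Set (Fin n → A)) : Set (Fin (c + n) → A) :=
  {g | g ∘ Fin.castAdd n ∈ Q ∧ g ∘ Fin.natAdd c ∈ R}

/-- Of the variables `Fin (r + c)` of `𝒫^(r + c)`, the last `c` serve as a register carrying a
derived fact while the first `r` replay a derivation of `𝒫^r`; `carryScope sc` is the register
followed by the working variables `sc`. -/
def carryScope (sc : Fin n → Fin r) : Fin (c + n) → Fin (r + c) :=
  Fin.append (Fin.natAdd r) (Fin.castAdd c ∘ sc)

theorem append_comp_carryScope (ω : Fin r → V) (π : Fin c → V) (sc : Fin n → Fin r) :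
    Fin.append ω π ∘ carryScope sc = Fin.append π (ω ∘ sc) := by
  funext i
  refine Fin.addCases (fun i => ?_) (fun i => ?_) i <;> simp [carryScope]

theorem comp_carryScope_mem_prodRel (f : Fin (r + c) → A) (sc : Fin n → Fin r)
    {Q : Set (Fin c → A)} {R : Set (Fin n → A)} :
    f ∘ carryScope sc ∈ prodRel Q R ↔ f ∘ Fin.natAdd r ∈ Q ∧ f ∘ Fin.castAdd c ∘ sc ∈ R := by
  simp [prodRel, carryScope, Function.comp_def]

variable [Nonempty V]

theorem Derives.iff_append_prodRel (hI : IsCSPInstance 𝔸 I) (π : Fin c → V)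
    (Q : Set (Fin c → A)) {ρ : Fin n → V} {R : Set (Fin n → A)} (h : Derives 𝔸 r I ρ R)
    (hn : n ≤ r) :
    Derives 𝔸 (r + c) I π Q ↔ Derives 𝔸 (r + c) I (Fin.append π ρ) (prodRel Q R) := by
  induction h with
  | @base n ρ R hc =>
    obtain ⟨ω, hω⟩ : ∃ ω : Fin r → V, ω ∘ Fin.castLE hn = ρ :=
      (Fin.castLE_injective hn).surjective_comp_right ρ
    have hπ : Fin.append ω π ∘ Fin.natAdd r = π := funext (Fin.append_right ω π)
    have hω' : Fin.append ω π ∘ Fin.castAdd c = ω := funext (Fin.append_left ω π)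
    have key := Derives.iff_of_symmetric hI (Fin.append ω π) (Fin.natAdd r)
      (carryScope (Fin.castLE hn)) le_add_self (by omega) (R := Q) (R' := prodRel Q R)
      [⟨n, Fin.castAdd c ∘ Fin.castLE hn, R⟩] (by
        simp only [List.mem_singleton, forall_eq]
        refine ⟨by omega, ?_⟩
        rwa [← Function.comp_assoc, hω', hω]) (fun f he => by
        rw [comp_carryScope_mem_prodRel]
        exact (and_iff_left (he _ (List.mem_singleton_self _))).symm)
    rwa [hπ, append_comp_carryScope, hω] at key
  | step rule ω _ hedb ih =>
    have hπ : Fin.append ω π ∘ Fin.natAdd r = π := funext (Fin.append_right ω π)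
    have hedb' := rule.remap_edb hedb le_self_add
      (funext (Fin.append_left ω π) : Fin.append ω π ∘ Fin.castAdd c = ω)
    have hhead : rule.head.arity ≤ r := rule.head_arity
    show _ ↔ Derives 𝔸 (r + c) I (Fin.append π (ω ∘ rule.head.scope)) _
    rw [← append_comp_carryScope]
    cases hidb : rule.idb with
    | none =>
      have key := Derives.iff_of_symmetric hI (Fin.append ω π) (Fin.natAdd r)
        (carryScope rule.head.scope) le_add_self (by omega)
        (R := Q) (R' := prodRel Q rule.head.rel) _ hedb' fun f he => by
          rw [Atom.forall_mem_map_remap_holds] at he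
          rw [comp_carryScope_mem_prodRel]
          exact (and_iff_left (rule.consistent _ (by simp [hidb]) he)).symm
      rwa [hπ] at key
    | some a =>
      have ha : a ∈ rule.idb := hidb
      have hchild : Derives 𝔸 (r + c) I π Q ↔
          Derives 𝔸 (r + c) I (Fin.append π (ω ∘ a.scope)) (prodRel Q a.rel) :=
        ih a ha (rule.idb_arity a ha)
      rw [← append_comp_carryScope] at hchild
      refine hchild.trans (Derives.iff_of_symmetric hI (Fin.append ω π) _ _
        (by have := rule.idb_arity a ha; omega) (by omega) _ hedb' fun f he => ?_)
      rw [Atom.forall_mem_map_remap_holds] at he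
      simp only [comp_carryScope_mem_prodRel]
      exact and_congr_right fun _ =>
        ⟨fun h => rule.consistent _ (fun a' ha' => Option.some_inj.mp (hidb.symm.trans ha') ▸ h) he,
          fun h => rule.mirror a ha (f ∘ Fin.castAdd c) h he⟩

theorem Derives.comp_iff_of_preimage_eq (hI : IsCSPInstance 𝔸 I) {π : Fin c → V}
    (e : Fin n → Fin c) (e' : Fin n' → Fin c) (hn : n ≤ r + c) (hn' : n' ≤ r + c)
    {R : Set (Fin n → A)} {R' : Set (Fin n' → A)} (hRR' : (· ∘ e) ⁻¹' R = (· ∘ e') ⁻¹' R') :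
    Derives 𝔸 (r + c) I (π ∘ e) R ↔ Derives 𝔸 (r + c) I (π ∘ e') R' := by
  obtain ⟨ω⟩ : Nonempty (Fin r → V) := inferInstance
  have hπ : Fin.append ω π ∘ Fin.natAdd r = π := funext (Fin.append_right ω π)
  have key := Derives.iff_of_symmetric hI (Fin.append ω π) (Fin.natAdd r ∘ e)
    (Fin.natAdd r ∘ e') hn hn' [] (by simp) fun f _ => Set.ext_iff.1 hRR' (f ∘ Fin.natAdd r)
  rwa [← Function.comp_assoc, ← Function.comp_assoc, hπ] at key

theorem Derives.iff_inter_preimage (hI : IsCSPInstance 𝔸 I) {π : Fin c → V}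
    (Q : Set (Fin c → A)) {e : Fin n → Fin c} {R : Set (Fin n → A)} (hn : n ≤ r + c)
    (h : Derives 𝔸 r I (π ∘ e) R) :
    Derives 𝔸 (r + c) I π Q ↔ Derives 𝔸 (r + c) I π (Q ∩ (· ∘ e) ⁻¹' R) := by
  generalize hρ : π ∘ e = ρ at h
  cases h with
  | base ρ R hc =>
    obtain ⟨ω⟩ : Nonempty (Fin r → V) := inferInstance
    have hπ : Fin.append ω π ∘ Fin.natAdd r = π := funext (Fin.append_right ω π)
    have key := Derives.iff_of_symmetric hI (Fin.append ω π) (Fin.natAdd r) (Fin.natAdd r)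
      le_add_self le_add_self (R := Q) (R' := Q ∩ (· ∘ e) ⁻¹' R)
      [⟨n, Fin.natAdd r ∘ e, R⟩] (by
        simp only [List.mem_singleton, forall_eq]
        refine ⟨hn, ?_⟩
        rwa [← Function.comp_assoc, hπ, hρ]) (fun f he =>
        (and_iff_left (he _ (List.mem_singleton_self _))).symm)
    rwa [hπ] at key
  | step rule ω hidb hedb =>
    have hhead : rule.head.arity ≤ r := rule.head_arity
    have hπe : Fin.append π (π ∘ e) = π ∘ Fin.append id e := by
      funext i
      refine Fin.addCases (fun i => ?_) (fun i => ?_) i <;> simp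
    refine (Derives.iff_append_prodRel hI π Q (.step rule ω hidb hedb) hhead).trans ?_
    rw [← hρ, hπe]
    exact Derives.comp_iff_of_preimage_eq hI _ id (by omega) le_add_self
      (by ext g; simp [prodRel, Function.comp_def])

theorem Derives.iff_inter_forall_holds (hI : IsCSPInstance 𝔸 I) {π : Fin c → V}
    (Q : Set (Fin c → A)) (l : List (Atom A c))
    (hl : ∀ a ∈ l, a.arity ≤ r + c ∧ Derives 𝔸 r I (π ∘ a.scope) a.rel) :
    Derives 𝔸 (r + c) I π Q ↔ Derives 𝔸 (r + c) I π (Q ∩ {g | ∀ a ∈ l, a.holds g}) := by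
  induction l generalizing Q with
  | nil => simp
  | cons a l ih =>
    rw [Derives.iff_inter_preimage hI Q (hl a List.mem_cons_self).1 (hl a List.mem_cons_self).2,
      ih _ fun b hb => hl b (List.mem_cons_of_mem a hb)]
    congr! 1
    ext g
    simp [Atom.holds, Function.comp_def, and_assoc]

end Register

section Unpacking

variable {A X : Type} {k s n : ℕ}

def packTuple (g : Fin (s * k) → X) : Fin s → Fin k → X :=
  fun i j => g (finProdFinEquiv (i, j))

def unpackScope (sc : Fin n → Fin s) : Fin (n * k) → Fin (s * k) :=
  finProdFinEquiv ∘ Prod.map sc id ∘ finProdFinEquiv.symm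

theorem unpackTuple_apply_finProdFinEquiv (σ : Fin s → Fin k → X) (i : Fin s) (j : Fin k) :
    unpackTuple σ (finProdFinEquiv (i, j)) = σ i j := by
  change Function.uncurry σ (finProdFinEquiv.symm (finProdFinEquiv (i, j))) = σ i j
  rw [Equiv.symm_apply_apply]
  rfl

theorem packTuple_unpackTuple (σ : Fin s → Fin k → X) : packTuple (unpackTuple σ) = σ := by
  funext i j
  exact unpackTuple_apply_finProdFinEquiv σ i j

theorem unpackTuple_packTuple (g : Fin (s * k) → X) : unpackTuple (packTuple g) = g := by
  funext t
  change g (finProdFinEquiv (finProdFinEquiv.symm t)) = g t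
  rw [Equiv.apply_symm_apply]

theorem unpackTuple_comp (ω : Fin s → Fin k → X) (sc : Fin n → Fin s) :
    unpackTuple (ω ∘ sc) = unpackTuple ω ∘ unpackScope sc := by
  funext t
  exact (unpackTuple_apply_finProdFinEquiv ω _ _).symm

theorem packTuple_comp_unpackScope (g : Fin (s * k) → X) (sc : Fin n → Fin s) :
    packTuple (g ∘ unpackScope sc) = packTuple g ∘ sc := by
  funext i j
  simp [packTuple, unpackScope]

theorem mem_unpackRel_iff {U : Set (Fin n → Fin k → A)} {t : Fin (n * k) → A} :
    t ∈ unpackRel U ↔ packTuple t ∈ U := by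
  constructor
  · rintro ⟨u, hu, ht⟩
    rwa [show t = unpackTuple u from funext ht, packTuple_unpackTuple]
  · exact fun h => ⟨packTuple t, h, fun i => congrFun (unpackTuple_packTuple t).symm i⟩

theorem unpackRel_empty : unpackRel (∅ : Set (Fin n → Fin k → A)) = ∅ := by
  simp [unpackRel]

def Atom.unpack (a : Atom (Fin k → A) s) : Atom A (s * k) :=
  ⟨a.arity * k, unpackScope a.scope, unpackRel a.rel⟩

theorem Atom.unpack_holds (a : Atom (Fin k → A) s) (g : Fin (s * k) → A) :
    a.unpack.holds g ↔ a.holds (packTuple g) := by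
  change g ∘ unpackScope a.scope ∈ unpackRel a.rel ↔ packTuple g ∘ a.scope ∈ a.rel
  rw [mem_unpackRel_iff, packTuple_comp_unpackScope]

end Unpacking

section Simulation

variable {A V : Type} {𝔸 : RelStruct A} {I : Instance A V} {k r s : ℕ}
  {𝔹 : RelStruct (Fin k → A)} {J : Instance (Fin k → A) (Fin k → V)}

theorem Derives.unpack_step [Nonempty V] (hI : IsCSPInstance 𝔸 I) (rule : Rule (Fin k → A) 𝔹 s)
    (ω : Fin s → Fin k → V)
    (hedb : ∀ b ∈ rule.edb, Derives 𝔸 r I (unpackTuple (ω ∘ b.scope)) (unpackRel b.rel))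
    (hidb : ∀ a ∈ rule.idb,
      Derives 𝔸 (r + s * k) I (unpackTuple (ω ∘ a.scope)) (unpackRel a.rel)) :
    Derives 𝔸 (r + s * k) I (unpackTuple (ω ∘ rule.head.scope)) (unpackRel rule.head.rel) := by
  have harity {m : ℕ} (hm : m ≤ s) : m * k ≤ r + s * k :=
    (Nat.mul_le_mul_right k hm).trans le_add_self
  have hedb' : ∀ b ∈ rule.edb.map Atom.unpack,
      b.arity ≤ r + s * k ∧ Derives 𝔸 r I (unpackTuple ω ∘ b.scope) b.rel := by
    simp only [List.mem_map]
    rintro _ ⟨b, hb, rfl⟩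
    exact ⟨harity (rule.edb_arity b hb), unpackTuple_comp ω b.scope ▸ hedb b hb⟩
  have hbody (g : Fin (s * k) → A) :
      (∀ b ∈ rule.edb.map Atom.unpack, b.holds g) ↔ ∀ b ∈ rule.edb, b.holds (packTuple g) := by
    simp only [List.forall_mem_map, Atom.unpack_holds]
  have hchild : Derives 𝔸 (r + s * k) I (unpackTuple ω) {g | ∀ a ∈ rule.idb, a.unpack.holds g} := by
    cases hi : rule.idb with
    | none => exact .of_forall_mem hI le_add_self (by simp)
    | some a =>
      have h := hidb a hi
      rw [unpackTuple_comp] at h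
      exact (Derives.comp_iff_of_preimage_eq hI _ id (harity (rule.idb_arity a hi)) le_add_self
        (by ext g; exact ⟨fun h' _ ha' => Option.some_inj.mp ha' ▸ h', fun h' => h' a rfl⟩)).1 h
  have hhead : Derives 𝔸 (r + s * k) I (unpackTuple ω)
      ({g | rule.head.unpack.holds g} ∩ {g | ∀ b ∈ rule.edb.map Atom.unpack, b.holds g}) := by
    refine (Derives.comp_iff_of_preimage_eq hI (π := unpackTuple ω) id id le_add_self le_add_self
      ?_).1 ((Derives.iff_inter_forall_holds hI _ _ hedb').1 hchild)
    ext g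
    simp only [Set.mem_preimage, Function.comp_id, Set.mem_inter_iff, Set.mem_ofPred_eq, hbody,
      Atom.unpack_holds, Option.mem_def]
    exact and_congr_left fun he =>
      ⟨fun h => rule.consistent _ h he, fun h a ha => rule.mirror a ha _ h he⟩
  rw [unpackTuple_comp]
  exact (Derives.comp_iff_of_preimage_eq hI id _ le_add_self (harity rule.head_arity) rfl).1
    ((Derives.iff_inter_forall_holds hI _ _ hedb').2 hhead)

theorem Derives.unpack [Nonempty V] (hI : IsCSPInstance 𝔸 I) (hr : 0 < r)
    (hJ : ∀ c ∈ J.constraints, Derives 𝔸 r I (unpackTuple c.2.1) (unpackRel c.2.2))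
    {ρ : Fin n → Fin k → V} {R : Set (Fin n → Fin k → A)} (h : Derives 𝔹 s J ρ R) :
    Derives 𝔸 (r + s * k) I (unpackTuple ρ) (unpackRel R) := by
  induction h with
  | base ρ R hc => exact (hJ _ hc).mono hI hr le_self_add
  | step rule ω _ hedb ih => exact .unpack_step hI rule ω (fun b hb => hJ _ (hedb b hb)) ih

theorem DerivesGoal.unpack [Nonempty V] (hI : IsCSPInstance 𝔸 I) (hr : 0 < r)
    (hJ : ∀ c ∈ J.constraints, Derives 𝔸 r I (unpackTuple c.2.1) (unpackRel c.2.2))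
    (h : DerivesGoal 𝔹 s J) : DerivesGoal 𝔸 (r + s * k) I := by
  obtain ⟨n, ρ, hn, hρ⟩ := h
  refine ⟨n * k, unpackTuple ρ, (Nat.mul_le_mul_right k hn).trans le_add_self, ?_⟩
  simpa only [unpackRel_empty] using hρ.unpack hI hr hJ

/-- Without variables, `J` has a unique assignment, which violates some constraint; that
constraint relation is then empty, and so is its unpacking, which has arity `0`. -/
theorem DerivesGoal.of_isEmpty [IsEmpty V]
    (hJ : ∀ c ∈ J.constraints, Derives 𝔸 r I (unpackTuple c.2.1) (unpackRel c.2.2))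
    (h : DerivesGoal 𝔹 s J) : DerivesGoal 𝔸 r I := by
  let f : (Fin k → V) → Fin k → A := fun w j => isEmptyElim (w j)
  obtain ⟨c, hc, hviol⟩ : ∃ c ∈ J.constraints, f ∘ c.2.1 ∉ c.2.2 := by
    by_contra! hsol
    exact h.not_satisfiable ⟨f, hsol⟩
  have hempty : c.2.2 = ∅ := Set.eq_empty_of_forall_notMem fun u hu =>
    hviol (by convert hu; funext i j; exact isEmptyElim (c.2.1 i j))
  have harity : c.1 * k = 0 := by
    by_contra hne
    exact isEmptyElim (unpackTuple c.2.1 ⟨0, Nat.pos_of_ne_zero hne⟩)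
  refine ⟨c.1 * k, unpackTuple c.2.1, by omega, ?_⟩
  simpa only [hempty, unpackRel_empty] using hJ c hc

end Simulation

theorem statement3_general {A V : Type} (k : ℕ)
    (𝔸 : RelStruct A) (𝔹 : RelStruct (Fin k → A))
    (I : Instance A V) (hI : IsCSPInstance 𝔸 I)
    {p : ℕ} {m : Fin p → ℕ}
    (σ : ∀ i, Fin (m i) → (Fin k → V))
    (S : ∀ i, Set (Fin (m i) → (Fin k → A)))
    (r s : ℕ) (hr : 1 ≤ r)
    (h1 : ∀ i, Derives 𝔸 r I (unpackTuple (σ i)) (unpackRel (S i)))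
    (h2 : DerivesGoal 𝔹 s
      (⟨{c | ∃ i, c = ⟨m i, σ i, S i⟩}⟩ : Instance (Fin k → A) (Fin k → V))) :
    DerivesGoal 𝔸 (r + k * s) I := by
  have hJ : ∀ c ∈ (⟨{c | ∃ i, c = ⟨m i, σ i, S i⟩}⟩ :
      Instance (Fin k → A) (Fin k → V)).constraints,
      Derives 𝔸 r I (unpackTuple c.2.1) (unpackRel c.2.2) := by
    rintro _ ⟨i, rfl⟩
    exact h1 i
  rw [Nat.mul_comm k s]
  cases isEmpty_or_nonempty V
  · exact (DerivesGoal.of_isEmpty hJ h2).mono hI hr le_self_add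
  · exact h2.unpack hI hr hJ

/-- stacking through a power of `A`.
Let `𝔸` be a relational structure on `A` and `𝔹` one on `A^k`, let `I` be an
instance of `CSP(𝔸)`, let `S_1, …, S_p` be basic relations of `𝔹` and
`σ_1, …, σ_p` tuples of elements of `V^k` such that
`𝒫_𝔸^r(I) ⊢ S̄_i(σ̄_i)` for each `i`, and `𝒫_𝔹^s(J) ⊢ G` where
`J = (V^k, {(σ_i, S_i)})`. Then `𝒫_𝔸^{r+ks}(I) ⊢ G`. -/
theorem statement3 {A V : Type} [Finite A] (k : ℕ)
    (𝔸 : RelStruct A) (𝔹 : RelStruct (Fin k → A))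
    (I : Instance A V) (hI : IsCSPInstance 𝔸 I)
    {p : ℕ} {m : Fin p → ℕ}
    (σ : ∀ i, Fin (m i) → (Fin k → V))
    (S : ∀ i, Set (Fin (m i) → (Fin k → A)))
    (hbasic : ∀ i, (⟨m i, S i⟩ : Σ n : ℕ, Set (Fin n → (Fin k → A))) ∈ 𝔹.basic)
    (r s : ℕ) (hr : 1 ≤ r) (hs : 1 ≤ s)
    (h1 : ∀ i, Derives 𝔸 r I (unpackTuple (σ i)) (unpackRel (S i)))
    (h2 : DerivesGoal 𝔹 s
      (⟨{c | ∃ i, c = ⟨m i, σ i, S i⟩}⟩ : Instance (Fin k → A) (Fin k → V))) :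
    DerivesGoal 𝔸 (r + k * s) I :=
  statement3_general k 𝔸 𝔹 I hI σ S r s hr h1 h2

end CSPPaper
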